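/- Let f = (1/n)∑_{z=1}^n f_z where each f_z: ℝ^d → ℝ has L-Lipschitz gradient. Fix points x and x̃ in ℝ^d, and let I be a uniformly random subset of {1,...,n} of size b. Define v = ∇f_I(x) - ∇f_I(x̃) + ∇f(x̃), where ∇f_I = (1/b)∑_{z∈I}∇f_z. Then E_I[‖v‖²] ≤ (L²/b)‖x - x̃‖² + ‖∇f(x)‖². -/

import Mathlib

open Finset

lemma count_subsets {α : Type*} [DecidableEq α] (s t : Finset α) (k : ℕ)
    (hts : t ⊆ s) (htk : t.card ≤ k) :
    ((s.powersetCard k).filter (fun I => t ⊆ I)).card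
      = (s.card - t.card).choose (k - t.card) := by
  rw [← Finset.card_sdiff_of_subset hts, ← Finset.card_powersetCard]
  apply Finset.card_bij (fun I _ => I \ t)
  · intro I hI
    simp only [mem_filter, mem_powersetCard] at hI
    exact mem_powersetCard.2 ⟨sdiff_subset_sdiff hI.1.1 le_rfl,
      by rw [card_sdiff_of_subset hI.2, hI.1.2]⟩
  · intro I hI J hJ h
    simp only [mem_filter] at hI hJ
    rw [← sdiff_union_of_subset hI.2, ← sdiff_union_of_subset hJ.2, h]
  · intro J hJ
    simp only [mem_powersetCard] at hJ
    have hdisj : Disjoint J t := disjoint_of_subset_left hJ.1 sdiff_disjoint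
    refine ⟨J ∪ t, ?_, ?_⟩
    · simp only [mem_filter, mem_powersetCard]
      refine ⟨⟨union_subset (hJ.1.trans (sdiff_subset)) hts, ?_⟩, subset_union_right⟩
      rw [card_union_of_disjoint hdisj, hJ.2]
      omega
    · rw [union_sdiff_right, sdiff_eq_self_of_disjoint hdisj]
open scoped RealInnerProductSpace

lemma swap1 {n : ℕ} {M : Type*} [AddCommMonoid M] (P : Finset (Finset (Fin n)))
    (F : Fin n → M) :
    ∑ I ∈ P, ∑ z ∈ I, F z
      = ∑ z : Fin n, ((P.filter (fun I => z ∈ I)).card) • F z := by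
  calc ∑ I ∈ P, ∑ z ∈ I, F z
      = ∑ I ∈ P, ∑ z : Fin n, if z ∈ I then F z else 0 := by
        refine sum_congr rfl fun I _ => ?_
        rw [Finset.sum_ite_mem, univ_inter]
    _ = ∑ z : Fin n, ∑ I ∈ P, if z ∈ I then F z else 0 := Finset.sum_comm
    _ = ∑ z : Fin n, ((P.filter (fun I => z ∈ I)).card) • F z := by
        refine sum_congr rfl fun z _ => ?_
        rw [← Finset.sum_filter, Finset.sum_const]

lemma swap2 {n : ℕ} (P : Finset (Finset (Fin n))) (F : Fin n → Fin n → ℝ) :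
    ∑ I ∈ P, ∑ z ∈ I, ∑ w ∈ I, F z w
      = ∑ z : Fin n, ∑ w : Fin n,
          ((P.filter (fun I => z ∈ I ∧ w ∈ I)).card : ℝ) * F z w := by
  calc ∑ I ∈ P, ∑ z ∈ I, ∑ w ∈ I, F z w
      = ∑ I ∈ P, ∑ z : Fin n, ∑ w : Fin n,
          if z ∈ I ∧ w ∈ I then F z w else 0 := by
        refine sum_congr rfl fun I _ => ?_
        rw [eq_comm]
        calc ∑ z : Fin n, ∑ w : Fin n, (if z ∈ I ∧ w ∈ I then F z w else 0)
            = ∑ z : Fin n, if z ∈ I then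
                (∑ w : Fin n, if w ∈ I then F z w else 0) else 0 := by
              refine sum_congr rfl fun z _ => ?_
              split <;> simp [*]
          _ = ∑ z ∈ I, ∑ w ∈ I, F z w := by
              simp [Finset.sum_ite_mem]
    _ = ∑ z : Fin n, ∑ w : Fin n, ∑ I ∈ P, if z ∈ I ∧ w ∈ I then F z w else 0 := by
        rw [Finset.sum_comm]
        exact sum_congr rfl fun z _ => Finset.sum_comm
    _ = _ := by
        refine sum_congr rfl fun z _ => sum_congr rfl fun w _ => ?_
        rw [← Finset.sum_filter, Finset.sum_const, nsmul_eq_mul]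

lemma pair_filter_eq {n : ℕ} (z w : Fin n) :
    (fun I : Finset (Fin n) => z ∈ I ∧ w ∈ I) = fun I => ({z, w} : Finset (Fin n)) ⊆ I := by
  funext I
  simp [insert_subset_iff]

lemma key_var {n b : ℕ} {E : Type*} [NormedAddCommGroup E] [InnerProductSpace ℝ E]
    (hb1 : 1 ≤ b) (a : Fin n → E) (ha : ∑ z, a z = 0) :
    ∑ I ∈ (Finset.univ : Finset (Fin n)).powersetCard b, ‖∑ z ∈ I, a z‖ ^ 2
      ≤ ((n - 1).choose (b - 1) : ℝ) * ∑ z, ‖a z‖ ^ 2 := by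
  have hnorm : (0:ℝ) ≤ ∑ z, ‖a z‖ ^ 2 := sum_nonneg fun z _ => sq_nonneg _
  have hexp : ∑ I ∈ (Finset.univ : Finset (Fin n)).powersetCard b, ‖∑ z ∈ I, a z‖ ^ 2
      = ∑ I ∈ (Finset.univ : Finset (Fin n)).powersetCard b,
          ∑ z ∈ I, ∑ w ∈ I, ⟪a z, a w⟫ := by
    refine sum_congr rfl fun I _ => ?_
    rw [← real_inner_self_eq_norm_sq, sum_inner]
    exact sum_congr rfl fun z _ => inner_sum _ _ _
  rw [hexp, swap2]
  -- counts
  have hcount : ∀ z w : Fin n, z ≠ w → b = 1 →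
      ((((Finset.univ : Finset (Fin n)).powersetCard b).filter
        (fun I => z ∈ I ∧ w ∈ I)).card) = 0 := by
    intro z w hzw hb
    rw [Finset.card_eq_zero, Finset.filter_eq_empty_iff]
    rintro I hI ⟨hz, hw⟩
    rw [mem_powersetCard] at hI
    have : 2 ≤ I.card := by
      rw [← Finset.card_pair hzw]
      exact Finset.card_le_card (by simp [insert_subset_iff, hz, hw])
    omega
  have hc1 : ∀ z : Fin n,
      ((((Finset.univ : Finset (Fin n)).powersetCard b).filter
        (fun I => z ∈ I ∧ z ∈ I)).card) = (n - 1).choose (b - 1) := by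
    intro z
    rw [Finset.filter_congr (fun I _ => by simp :
        ∀ I ∈ (Finset.univ : Finset (Fin n)).powersetCard b,
          (z ∈ I ∧ z ∈ I) ↔ ({z} : Finset (Fin n)) ⊆ I),
      count_subsets _ _ _ (Finset.subset_univ _) (by simpa using hb1)]
    simp
  set C : ℝ := if b = 1 then 0 else ((n - 2).choose (b - 2) : ℝ) with hC
  have hCnonneg : 0 ≤ C := by
    rw [hC]; split <;> positivity
  have hc2 : ∀ z w : Fin n, z ≠ w →
      ((((Finset.univ : Finset (Fin n)).powersetCard b).filter
        (fun I => z ∈ I ∧ w ∈ I)).card : ℝ) = C := by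
    intro z w h
    by_cases hb : b = 1
    · rw [hcount z w h hb]; simp [hC, hb]
    · have h2 : 2 ≤ b := by omega
      have hcard : ({z, w} : Finset (Fin n)).card = 2 := Finset.card_pair h
      rw [Finset.filter_congr (fun I _ => by simp [Finset.insert_subset_iff] :
          ∀ I ∈ (Finset.univ : Finset (Fin n)).powersetCard b,
            (z ∈ I ∧ w ∈ I) ↔ ({z, w} : Finset (Fin n)) ⊆ I),
        count_subsets _ _ _ (Finset.subset_univ _) (by omega : ({z, w} : Finset (Fin n)).card ≤ b)]
      simp [hC, hb, hcard]
  have hS : ∀ z : Fin n, ∑ w ∈ Finset.univ.erase z, ⟪a z, a w⟫ = -‖a z‖ ^ 2 := by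
    intro z
    rw [← inner_sum]
    have : ∑ w ∈ Finset.univ.erase z, a w = -a z := by
      have := Finset.add_sum_erase Finset.univ a (Finset.mem_univ z)
      rw [ha] at this
      linear_combination (norm := module) this
    rw [this, inner_neg_right, real_inner_self_eq_norm_sq]
  calc ∑ z : Fin n, ∑ w : Fin n,
        ((((Finset.univ : Finset (Fin n)).powersetCard b).filter
          (fun I => z ∈ I ∧ w ∈ I)).card : ℝ) * ⟪a z, a w⟫
      = ∑ z : Fin n, (((n - 1).choose (b - 1) : ℝ) * ‖a z‖ ^ 2 - C * ‖a z‖ ^ 2) := by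
        refine sum_congr rfl fun z _ => ?_
        rw [← Finset.add_sum_erase _ _ (Finset.mem_univ z), hc1 z,
          real_inner_self_eq_norm_sq]
        have : ∑ w ∈ Finset.univ.erase z,
            ((((Finset.univ : Finset (Fin n)).powersetCard b).filter
              (fun I => z ∈ I ∧ w ∈ I)).card : ℝ) * ⟪a z, a w⟫
            = C * ∑ w ∈ Finset.univ.erase z, ⟪a z, a w⟫ := by
          rw [Finset.mul_sum]
          refine sum_congr rfl fun w hw => ?_
          rw [hc2 z w (Finset.ne_of_mem_erase hw).symm]
        rw [this, hS z]
        ring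
    _ = ((n - 1).choose (b - 1) : ℝ) * ∑ z, ‖a z‖ ^ 2 - C * ∑ z, ‖a z‖ ^ 2 := by
        rw [Finset.sum_sub_distrib, Finset.mul_sum, Finset.mul_sum]
    _ ≤ ((n - 1).choose (b - 1) : ℝ) * ∑ z, ‖a z‖ ^ 2 := by
        nlinarith [mul_nonneg hCnonneg hnorm]

lemma count1 {n b : ℕ} (hb1 : 1 ≤ b) (z : Fin n) :
    ((((Finset.univ : Finset (Fin n)).powersetCard b).filter
      (fun I => z ∈ I)).card) = (n - 1).choose (b - 1) := by
  rw [Finset.filter_congr (fun I _ => by simp :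
      ∀ I ∈ (Finset.univ : Finset (Fin n)).powersetCard b,
        (z ∈ I) ↔ ({z} : Finset (Fin n)) ⊆ I),
    count_subsets _ _ _ (Finset.subset_univ _) (by simpa using hb1)]
  simp

set_option maxHeartbeats 1000000 in
open Finset in
theorem stmt_12 (d n b : ℕ) (hn : 1 ≤ n) (hb1 : 1 ≤ b) (hbn : b ≤ n)
    (f : Fin n → EuclideanSpace ℝ (Fin d) → ℝ) (L : ℝ)
    (hdiff : ∀ z, Differentiable ℝ (f z))
    (hLip : ∀ z x y, ‖gradient (f z) x - gradient (f z) y‖ ≤ L * ‖x - y‖)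
    (x xt : EuclideanSpace ℝ (Fin d)) :
    (n.choose b : ℝ)⁻¹ *
        ∑ I ∈ (Finset.univ : Finset (Fin n)).powersetCard b,
          ‖(b : ℝ)⁻¹ • ∑ z ∈ I, gradient (f z) x
            - (b : ℝ)⁻¹ • ∑ z ∈ I, gradient (f z) xt
            + (n : ℝ)⁻¹ • ∑ z, gradient (f z) xt‖ ^ 2
      ≤ L ^ 2 / b * ‖x - xt‖ ^ 2 + ‖(n : ℝ)⁻¹ • ∑ z, gradient (f z) x‖ ^ 2 := by
  classical
  have hn0 : (n : ℝ) ≠ 0 := by positivity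
  have hb0 : (b : ℝ) ≠ 0 := by positivity
  set G : EuclideanSpace ℝ (Fin d) := (n : ℝ)⁻¹ • ∑ z, gradient (f z) x with hG
  set Gt : EuclideanSpace ℝ (Fin d) := (n : ℝ)⁻¹ • ∑ z, gradient (f z) xt with hGt
  set μ : EuclideanSpace ℝ (Fin d) := G - Gt with hμ
  set g : Fin n → EuclideanSpace ℝ (Fin d) :=
    fun z => gradient (f z) x - gradient (f z) xt with hg
  set a : Fin n → EuclideanSpace ℝ (Fin d) := fun z => g z - μ with ha_def
  have hsumg : ∑ z, g z = (n : ℝ) • μ := by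
    rw [hμ, hG, hGt, smul_sub, smul_smul, smul_smul, mul_inv_cancel₀ hn0, one_smul, one_smul]
    simp [hg, Finset.sum_sub_distrib]
  have ha : ∑ z, a z = 0 := by
    rw [ha_def]
    rw [Finset.sum_sub_distrib, hsumg, Finset.sum_const, card_univ]
    simp [Nat.cast_smul_eq_nsmul]
  set N := n.choose b with hN
  have hNpos : 0 < N := Nat.choose_pos hbn
  set c1 := (n - 1).choose (b - 1) with hc1def
  -- rewrite each term
  have hterm : ∀ I ∈ (Finset.univ : Finset (Fin n)).powersetCard b,
      (b : ℝ)⁻¹ • ∑ z ∈ I, gradient (f z) x - (b : ℝ)⁻¹ • ∑ z ∈ I, gradient (f z) xt + Gt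
        = (b : ℝ)⁻¹ • ∑ z ∈ I, a z + G := by
    intro I hI
    have hcard : I.card = b := (mem_powersetCard.1 hI).2
    have h1 : ∑ z ∈ I, a z = (∑ z ∈ I, gradient (f z) x - ∑ z ∈ I, gradient (f z) xt)
        - (b : ℝ) • μ := by
      rw [ha_def]
      rw [Finset.sum_sub_distrib, Finset.sum_const, hcard, Nat.cast_smul_eq_nsmul]
      simp [hg, Finset.sum_sub_distrib]
    rw [h1, smul_sub, smul_smul, inv_mul_cancel₀ hb0, one_smul, smul_sub, hμ]
    abel
  rw [Finset.sum_congr rfl (fun I hI => by rw [hterm I hI])]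
  -- expand squares
  have hexp : ∀ I : Finset (Fin n),
      ‖(b : ℝ)⁻¹ • ∑ z ∈ I, a z + G‖ ^ 2
        = ((b:ℝ)⁻¹)^2 * ‖∑ z ∈ I, a z‖ ^ 2
          + 2 * ⟪(b : ℝ)⁻¹ • ∑ z ∈ I, a z, G⟫ + ‖G‖ ^ 2 := by
    intro I
    rw [norm_add_sq_real, norm_smul]
    simp [mul_pow]
  rw [Finset.sum_congr rfl (fun I _ => hexp I)]
  rw [Finset.sum_add_distrib, Finset.sum_add_distrib, Finset.sum_const, card_powersetCard,
    card_univ, Fintype.card_fin]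
  -- middle term vanishes
  have hmid : ∑ I ∈ (Finset.univ : Finset (Fin n)).powersetCard b,
      2 * ⟪(b : ℝ)⁻¹ • ∑ z ∈ I, a z, G⟫ = 0 := by
    rw [← Finset.mul_sum, ← sum_inner]
    have : ∑ I ∈ (Finset.univ : Finset (Fin n)).powersetCard b,
        (b : ℝ)⁻¹ • ∑ z ∈ I, a z = 0 := by
      rw [← Finset.smul_sum, swap1]
      rw [Finset.sum_congr rfl (fun z _ => by rw [count1 hb1 z])]
      rw [← Finset.smul_sum, ha]
      simp
    rw [this, inner_zero_left, mul_zero]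
  rw [hmid]
  rw [← Finset.mul_sum]
  -- variance bound
  have hvar := key_var (E := EuclideanSpace ℝ (Fin d)) hb1 a ha
  have hr : (0:ℝ) ≤ L ^ 2 * ‖x - xt‖ ^ 2 := by positivity
  have hA : ∑ z, ‖a z‖ ^ 2 ≤ (n : ℝ) * (L ^ 2 * ‖x - xt‖ ^ 2) := by
    have h1 : ∑ z, ‖a z‖ ^ 2 ≤ ∑ z, ‖g z‖ ^ 2 := by
      have expand : ∀ z : Fin n, ‖a z‖ ^ 2 = ‖g z‖ ^ 2 - 2 * ⟪g z, μ⟫ + ‖μ‖ ^ 2 := by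
        intro z
        rw [ha_def]
        exact norm_sub_sq_real _ _
      calc ∑ z, ‖a z‖ ^ 2 = ∑ z, (‖g z‖ ^ 2 - 2 * ⟪g z, μ⟫ + ‖μ‖ ^ 2) :=
            Finset.sum_congr rfl fun z _ => expand z
        _ = ∑ z, ‖g z‖ ^ 2 - 2 * ⟪∑ z, g z, μ⟫ + (n:ℝ) * ‖μ‖ ^ 2 := by
            rw [Finset.sum_add_distrib, Finset.sum_sub_distrib, sum_inner, ← Finset.mul_sum,
              Finset.sum_const, card_univ, Fintype.card_fin, nsmul_eq_mul]
        _ = ∑ z, ‖g z‖ ^ 2 - (n:ℝ) * ‖μ‖ ^ 2 := by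
            rw [hsumg, real_inner_smul_left, real_inner_self_eq_norm_sq]
            ring
        _ ≤ ∑ z, ‖g z‖ ^ 2 := by nlinarith [sq_nonneg ‖μ‖, (Nat.one_le_cast (α := ℝ)).2 hn]
    have h2 : ∑ z, ‖g z‖ ^ 2 ≤ ∑ z : Fin n, L ^ 2 * ‖x - xt‖ ^ 2 := by
      refine Finset.sum_le_sum fun z _ => ?_
      have := hLip z x xt
      nlinarith [norm_nonneg (g z)]
    calc ∑ z, ‖a z‖ ^ 2 ≤ ∑ z : Fin n, L ^ 2 * ‖x - xt‖ ^ 2 := h1.trans h2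
      _ = (n : ℝ) * (L ^ 2 * ‖x - xt‖ ^ 2) := by
          rw [Finset.sum_const, card_univ, Fintype.card_fin, nsmul_eq_mul]
  -- combinatorial identity n * c1 = N * b
  have hid : (n : ℝ) * (c1 : ℝ) = (N : ℝ) * (b : ℝ) := by
    have : n * c1 = N * b := by
      obtain ⟨m, rfl⟩ := Nat.exists_eq_add_of_le hn
      obtain ⟨k, rfl⟩ := Nat.exists_eq_add_of_le hb1
      simpa [hN, hc1def, Nat.add_comm, Nat.mul_comm] using Nat.add_one_mul_choose_eq m k
    exact_mod_cast this
  have hT0 : (0:ℝ) ≤ ∑ I ∈ (Finset.univ : Finset (Fin n)).powersetCard b,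
      ‖∑ z ∈ I, a z‖ ^ 2 := Finset.sum_nonneg fun I _ => sq_nonneg _
  have hfinal : (N : ℝ)⁻¹ * (((b:ℝ)⁻¹)^2 *
      ∑ I ∈ (Finset.univ : Finset (Fin n)).powersetCard b, ‖∑ z ∈ I, a z‖ ^ 2)
      ≤ L ^ 2 / b * ‖x - xt‖ ^ 2 := by
    have step1 : ∑ I ∈ (Finset.univ : Finset (Fin n)).powersetCard b, ‖∑ z ∈ I, a z‖ ^ 2
        ≤ (c1 : ℝ) * ((n : ℝ) * (L ^ 2 * ‖x - xt‖ ^ 2)) :=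
      hvar.trans (mul_le_mul_of_nonneg_left hA (Nat.cast_nonneg _))
    calc (N : ℝ)⁻¹ * (((b:ℝ)⁻¹)^2 *
          ∑ I ∈ (Finset.univ : Finset (Fin n)).powersetCard b, ‖∑ z ∈ I, a z‖ ^ 2)
        ≤ (N : ℝ)⁻¹ * (((b:ℝ)⁻¹)^2 * ((c1 : ℝ) * ((n : ℝ) * (L ^ 2 * ‖x - xt‖ ^ 2)))) :=
          mul_le_mul_of_nonneg_left (mul_le_mul_of_nonneg_left step1 (sq_nonneg _))
            (inv_nonneg.2 (Nat.cast_nonneg _))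
      _ = L ^ 2 / b * ‖x - xt‖ ^ 2 := by
          have hN0 : (N : ℝ) ≠ 0 := Nat.cast_ne_zero.2 hNpos.ne'
          rw [show ((c1 : ℝ) * ((n : ℝ) * (L ^ 2 * ‖x - xt‖ ^ 2)))
              = (N : ℝ) * (b : ℝ) * (L ^ 2 * ‖x - xt‖ ^ 2) by rw [← hid]; ring]
          rw [show (N : ℝ)⁻¹ * (((b:ℝ)⁻¹)^2 * ((N : ℝ) * (b : ℝ) * (L ^ 2 * ‖x - xt‖ ^ 2)))
              = ((N:ℝ)⁻¹ * (N:ℝ)) * (((b:ℝ) * (b:ℝ)⁻¹) * ((b:ℝ)⁻¹ * (L ^ 2 * ‖x - xt‖ ^ 2)))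
              by ring,
            inv_mul_cancel₀ hN0, mul_inv_cancel₀ hb0, one_mul, one_mul]
          ring
  have hNinv : (0:ℝ) ≤ (N:ℝ)⁻¹ := inv_nonneg.2 (Nat.cast_nonneg _)
  calc (N : ℝ)⁻¹ * (((b:ℝ)⁻¹)^2 *
        (∑ I ∈ (Finset.univ : Finset (Fin n)).powersetCard b, ‖∑ z ∈ I, a z‖ ^ 2)
        + 0 + N • ‖G‖ ^ 2)
      = (N : ℝ)⁻¹ * (((b:ℝ)⁻¹)^2 *
        ∑ I ∈ (Finset.univ : Finset (Fin n)).powersetCard b, ‖∑ z ∈ I, a z‖ ^ 2)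
        + ‖G‖ ^ 2 := by
        have hN0 : (N : ℝ) ≠ 0 := Nat.cast_ne_zero.2 hNpos.ne'
        rw [add_zero, nsmul_eq_mul]
        linear_combination ‖G‖ ^ 2 * inv_mul_cancel₀ hN0
    _ ≤ L ^ 2 / b * ‖x - xt‖ ^ 2 + ‖G‖ ^ 2 := add_le_add_left hfinal _
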